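/- arXiv:2212.10010 — 3 statements merged into one kernel-verified Lean document; each statement's English description precedes it below -/
import Mathlib

section
/- Let F(v) = E[sqrt(vᵀGv)] with G a random symmetric positive definite matrix (under suitable integrability and differentiability-under-the-integral assumptions). Then the fundamental tensor (1/2) Hess(F²)(v) is strictly positive definite for every v ≠ 0; i.e., F satisfies the strong convexity criterion of a Finsler metric. -/
open Matrix MeasureTheory Filter Topology

section AuxLemmas

lemma secondDiff_tendsto {f : ℝ → ℝ} (hf : ContDiff ℝ 2 f) :
    Tendsto (fun t : ℝ => (f t + f (-t) - 2 * f 0) / t ^ 2) (𝓝[≠] (0:ℝ))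
      (𝓝 (deriv (deriv f) 0)) := by
  have hd : Differentiable ℝ f := hf.differentiable (by norm_num)
  have hf1 : ContDiff ℝ 1 (deriv f) :=
    ((contDiff_succ_iff_deriv (n := 1)).mp (by exact_mod_cast hf)).2.2
  have hd1 : Differentiable ℝ (deriv f) := hf1.differentiable one_ne_zero
  have hder0 : HasDerivAt (deriv f) (deriv (deriv f) 0) 0 := (hd1 0).hasDerivAt
  have h1 : Tendsto (fun t : ℝ => (deriv f t - deriv f 0) / t) (𝓝[≠] (0:ℝ))
      (𝓝 (deriv (deriv f) 0)) := by
    have h := hasDerivAt_iff_tendsto_slope.mp hder0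
    refine h.congr fun t => ?_
    simp [slope_def_field]
  have hneg : Tendsto (fun t : ℝ => -t) (𝓝[≠] (0:ℝ)) (𝓝[≠] (0:ℝ)) := by
    apply tendsto_nhdsWithin_of_tendsto_nhds_of_eventually_within
    · have : Tendsto (fun t : ℝ => -t) (𝓝 (0:ℝ)) (𝓝 (-0:ℝ)) := tendsto_id.neg
      simp only [neg_zero] at this
      exact this.mono_left nhdsWithin_le_nhds
    · filter_upwards [self_mem_nhdsWithin] with t ht
      simpa using ht
  have h2 : Tendsto (fun t : ℝ => (deriv f (-t) - deriv f 0) / (-t)) (𝓝[≠] (0:ℝ))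
      (𝓝 (deriv (deriv f) 0)) := h1.comp hneg
  have hdiv : Tendsto (fun t : ℝ => (deriv f t - deriv f (-t)) / (2 * t)) (𝓝[≠] (0:ℝ))
      (𝓝 (deriv (deriv f) 0)) := by
    have hc : Tendsto (fun t : ℝ =>
        ((deriv f t - deriv f 0) / t + (deriv f (-t) - deriv f 0) / (-t)) / 2)
        (𝓝[≠] (0:ℝ)) (𝓝 ((deriv (deriv f) 0 + deriv (deriv f) 0) / 2)) :=
      (h1.add h2).div_const 2
    have : (deriv (deriv f) 0 + deriv (deriv f) 0) / 2 = deriv (deriv f) 0 := by ring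
    rw [this] at hc
    refine hc.congr' ?_
    filter_upwards [self_mem_nhdsWithin] with t ht
    have ht' : t ≠ 0 := by simpa using ht
    rw [div_neg, ← sub_eq_add_neg, div_sub_div_same, div_div]
    ring_nf
  have key := HasDerivAt.lhopital_zero_nhdsNE
    (f := fun t : ℝ => f t + f (-t) - 2 * f 0) (f' := fun t => deriv f t - deriv f (-t))
    (g := fun t : ℝ => t ^ 2) (g' := fun t => 2 * t)
    ?_ ?_ ?_ ?_ ?_ hdiv
  · exact key
  · filter_upwards with t
    have h3 : HasDerivAt (fun s : ℝ => f (-s)) (-deriv f (-t)) t := by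
      have := ((hd (-t)).hasDerivAt.comp t (hasDerivAt_neg t))
      exact this.congr_deriv (by ring)
    simpa [sub_eq_add_neg] using ((hd t).hasDerivAt.add h3).sub_const (2 * f 0)
  · filter_upwards with t
    simpa [mul_comm] using (hasDerivAt_pow 2 t)
  · filter_upwards [self_mem_nhdsWithin] with t ht
    have ht' : t ≠ 0 := by simpa using ht
    simp [ht']
  · have : Tendsto (fun t : ℝ => f t + f (-t) - 2 * f 0) (𝓝 (0:ℝ))
        (𝓝 (f 0 + f (-0) - 2 * f 0)) :=
      ((hd.continuous.tendsto 0).add ((hd.continuous.tendsto (-0)).comp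
        tendsto_id.neg)).sub tendsto_const_nhds
    simp only [neg_zero] at this
    have h0 : f 0 + f 0 - 2 * f 0 = 0 := by ring
    rw [h0] at this
    exact this.mono_left nhdsWithin_le_nhds
  · have : Tendsto (fun t : ℝ => t ^ 2) (𝓝 (0:ℝ)) (𝓝 ((0:ℝ) ^ 2)) := (continuous_pow 2).tendsto 0
    simp only [ne_eq, OfNat.ofNat_ne_zero, not_false_eq_true, zero_pow] at this
    exact this.mono_left nhdsWithin_le_nhds

lemma poly_hasDerivAt {a b c : ℝ} (t : ℝ) :
    HasDerivAt (fun t : ℝ => c * t ^ 2 + 2 * b * t + a) (2 * c * t + 2 * b) t := by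
  have h1 : HasDerivAt (fun t : ℝ => c * t ^ 2) (c * (2 * t)) t := by
    simpa using (hasDerivAt_pow 2 t).const_mul c
  have h2 : HasDerivAt (fun t : ℝ => 2 * b * t) (2 * b) t := by
    simpa using (hasDerivAt_id t).const_mul (2 * b)
  have := (h1.add h2).add_const a
  exact this.congr_deriv (by ring)

lemma poly_contDiff {a b c : ℝ} : ContDiff ℝ 2 (fun t : ℝ => c * t ^ 2 + 2 * b * t + a) :=
  ((contDiff_const.mul (contDiff_id.pow 2)).add (contDiff_const.mul contDiff_id)).add contDiff_const

lemma sqrtq_contDiff {a b c : ℝ} (hp : ∀ t : ℝ, 0 < c * t ^ 2 + 2 * b * t + a) :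
    ContDiff ℝ 2 (fun t : ℝ => Real.sqrt (c * t ^ 2 + 2 * b * t + a)) := by
  rw [contDiff_iff_contDiffAt]
  intro t
  exact (Real.contDiffAt_sqrt (ne_of_gt (hp t))).comp t (poly_contDiff.contDiffAt)

lemma sqrtq_deriv {a b c : ℝ} (hp : ∀ t : ℝ, 0 < c * t ^ 2 + 2 * b * t + a) :
    deriv (fun t : ℝ => Real.sqrt (c * t ^ 2 + 2 * b * t + a)) =
      fun t : ℝ => (c * t + b) / Real.sqrt (c * t ^ 2 + 2 * b * t + a) := by
  funext t
  have h : HasDerivAt (fun t : ℝ => Real.sqrt (c * t ^ 2 + 2 * b * t + a))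
      ((2 * c * t + 2 * b) * (1 / (2 * Real.sqrt (c * t ^ 2 + 2 * b * t + a)))) t := by
    have hs := Real.hasDerivAt_sqrt (ne_of_gt (hp t))
    have := hs.comp t (poly_hasDerivAt t)
    exact this.congr_deriv (by ring)
  rw [h.deriv]
  have hsp : Real.sqrt (c * t ^ 2 + 2 * b * t + a) > 0 := Real.sqrt_pos.mpr (hp t)
  field_simp

lemma sqrtq_deriv2 {a b c : ℝ} (hp : ∀ t : ℝ, 0 < c * t ^ 2 + 2 * b * t + a) :
    deriv (deriv (fun t : ℝ => Real.sqrt (c * t ^ 2 + 2 * b * t + a))) 0 =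
      a ^ (-(1:ℝ)/2) * c - a ^ (-(3:ℝ)/2) * b ^ 2 := by
  have ha : (0:ℝ) < a := by simpa using hp 0
  have hsa : (0:ℝ) < Real.sqrt a := Real.sqrt_pos.mpr ha
  rw [sqrtq_deriv hp]
  have hnum : HasDerivAt (fun t : ℝ => c * t + b) c 0 := by
    simpa using ((hasDerivAt_id (0:ℝ)).const_mul c).add_const b
  have hden : HasDerivAt (fun t : ℝ => Real.sqrt (c * t ^ 2 + 2 * b * t + a))
      ((2 * c * 0 + 2 * b) * (1 / (2 * Real.sqrt (c * 0 ^ 2 + 2 * b * 0 + a)))) 0 := by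
    have hs := Real.hasDerivAt_sqrt (ne_of_gt (hp 0))
    have := hs.comp 0 (poly_hasDerivAt 0)
    exact this.congr_deriv (by ring)
  have hden' : HasDerivAt (fun t : ℝ => Real.sqrt (c * t ^ 2 + 2 * b * t + a))
      (b / Real.sqrt a) 0 := by
    convert hden using 1
    simp
    field_simp
  have hq := hnum.fun_div hden' (by simpa using (ne_of_gt hsa))
  rw [hq.deriv]
  have h0 : Real.sqrt (c * 0 ^ 2 + 2 * b * 0 + a) = Real.sqrt a := by norm_num
  rw [h0]
  have hsq : Real.sqrt a ^ 2 = a := Real.sq_sqrt ha.le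
  have hr1 : a ^ (-(1:ℝ)/2) = (Real.sqrt a)⁻¹ := by
    rw [show -(1:ℝ)/2 = -(1/2) by ring, Real.rpow_neg ha.le, ← Real.sqrt_eq_rpow]
  have hr3 : a ^ (-(3:ℝ)/2) = (a * Real.sqrt a)⁻¹ := by
    rw [show -(3:ℝ)/2 = -(3/2) by ring, Real.rpow_neg ha.le,
      show (3:ℝ)/2 = 1 + 1/2 by ring, Real.rpow_add ha, Real.rpow_one, ← Real.sqrt_eq_rpow]
  rw [hr1, hr3]
  simp only [mul_zero, zero_add, mul_comm]
  field_simp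
  linear_combination (b ^ 2) * hsq

lemma symm_dot {q : ℕ} {A : Matrix (Fin q) (Fin q) ℝ} (hA : A.IsHermitian)
    (v w : Fin q → ℝ) : (A *ᵥ v) ⬝ᵥ w = v ⬝ᵥ A *ᵥ w := by
  rw [Matrix.dotProduct_mulVec, ← Matrix.mulVec_transpose]
  rw [show Aᵀ = A from by simpa [Matrix.IsHermitian, Matrix.conjTranspose_eq_transpose_of_trivial] using hA]

lemma quad_expand {q : ℕ} {A : Matrix (Fin q) (Fin q) ℝ} (hA : A.IsHermitian)
    (v w : Fin q → ℝ) (t : ℝ) :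
    (v + t • w) ⬝ᵥ A *ᵥ (v + t • w) =
      (w ⬝ᵥ A *ᵥ w) * t ^ 2 + (2 * ((A *ᵥ v) ⬝ᵥ w)) * t + v ⬝ᵥ A *ᵥ v := by
  have hsym := symm_dot hA v w
  have hsym' : w ⬝ᵥ A *ᵥ v = (A *ᵥ v) ⬝ᵥ w := (dotProduct_comm _ _).symm
  simp [Matrix.mulVec_add, Matrix.mulVec_smul, dotProduct_add, add_dotProduct,
    dotProduct_smul, smul_dotProduct, smul_eq_mul, hsym', ← hsym]
  ring

lemma cs_le {q : ℕ} {A : Matrix (Fin q) (Fin q) ℝ} (hA : A.PosDef)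
    (v w : Fin q → ℝ) :
    ((A *ᵥ v) ⬝ᵥ w) ^ 2 ≤ (v ⬝ᵥ A *ᵥ v) * (w ⬝ᵥ A *ᵥ w) := by
  have h : ∀ t : ℝ, 0 ≤ (w ⬝ᵥ A *ᵥ w) * (t * t) + (2 * ((A *ᵥ v) ⬝ᵥ w)) * t + v ⬝ᵥ A *ᵥ v := by
    intro t
    have := quad_expand hA.1 v w t
    rw [← sq]
    rw [← this]
    rcases eq_or_ne (v + t • w) 0 with h0 | h0
    · simp [h0]
    · exact le_of_lt (hA.dotProduct_mulVec_pos h0)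
  have hd := discrim_le_zero h
  rw [discrim] at hd
  nlinarith [hd]

lemma cs_lt {q : ℕ} {A : Matrix (Fin q) (Fin q) ℝ} (hA : A.PosDef)
    {v w : Fin q → ℝ} (hv : v ≠ 0) (hw : ∀ c : ℝ, w ≠ c • v) :
    ((A *ᵥ v) ⬝ᵥ w) ^ 2 < (v ⬝ᵥ A *ᵥ v) * (w ⬝ᵥ A *ᵥ w) := by
  have hw0 : w ≠ 0 := by
    intro h; exact hw 0 (by simp [h])
  have hc : (0:ℝ) < w ⬝ᵥ A *ᵥ w := hA.dotProduct_mulVec_pos hw0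
  have h : ∀ t : ℝ, 0 < (w ⬝ᵥ A *ᵥ w) * (t * t) + (2 * ((A *ᵥ v) ⬝ᵥ w)) * t + v ⬝ᵥ A *ᵥ v := by
    intro t
    have := quad_expand hA.1 v w t
    rw [← sq, ← this]
    apply hA.dotProduct_mulVec_pos
    intro h0
    rcases eq_or_ne t 0 with rfl | ht
    · simp at h0; exact hv h0
    · apply hw (-t⁻¹)
      have : v = -(t • w) := by
        rw [← add_eq_zero_iff_eq_neg]; exact h0
      rw [this]
      ext i
      simp [Pi.smul_apply]
      field_simp
  have hd := discrim_lt_zero (ne_of_gt hc) h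
  rw [discrim] at hd
  nlinarith [hd]

lemma rpow_neg_half {a : ℝ} (ha : 0 < a) : a ^ (-(1:ℝ)/2) = (Real.sqrt a)⁻¹ := by
  rw [show -(1:ℝ)/2 = -(1/2) by ring, Real.rpow_neg ha.le, ← Real.sqrt_eq_rpow]

lemma rpow_neg_threehalf {a : ℝ} (ha : 0 < a) : a ^ (-(3:ℝ)/2) = (a * Real.sqrt a)⁻¹ := by
  rw [show -(3:ℝ)/2 = -(3/2) by ring, Real.rpow_neg ha.le,
    show (3:ℝ)/2 = 1 + 1/2 by ring, Real.rpow_add ha, Real.rpow_one, ← Real.sqrt_eq_rpow]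

lemma triangle_ineq {q : ℕ} {A : Matrix (Fin q) (Fin q) ℝ} (hA : A.PosDef)
    (x y : Fin q → ℝ) :
    Real.sqrt ((x + y) ⬝ᵥ A *ᵥ (x + y)) ≤
      Real.sqrt (x ⬝ᵥ A *ᵥ x) + Real.sqrt (y ⬝ᵥ A *ᵥ y) := by
  have hx0 : 0 ≤ x ⬝ᵥ A *ᵥ x := hA.posSemidef.dotProduct_mulVec_nonneg x
  have hy0 : 0 ≤ y ⬝ᵥ A *ᵥ y := hA.posSemidef.dotProduct_mulVec_nonneg y
  set p := Real.sqrt (x ⬝ᵥ A *ᵥ x) with hp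
  set r := Real.sqrt (y ⬝ᵥ A *ᵥ y) with hr
  have hp2 : p ^ 2 = x ⬝ᵥ A *ᵥ x := Real.sq_sqrt hx0
  have hr2 : r ^ 2 = y ⬝ᵥ A *ᵥ y := Real.sq_sqrt hy0
  have hpn : 0 ≤ p := Real.sqrt_nonneg _
  have hrn : 0 ≤ r := Real.sqrt_nonneg _
  have hb : ((A *ᵥ x) ⬝ᵥ y) ^ 2 ≤ (x ⬝ᵥ A *ᵥ x) * (y ⬝ᵥ A *ᵥ y) := cs_le hA x y
  have hxy : (A *ᵥ x) ⬝ᵥ y ≤ p * r := by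
    have h1 : (A *ᵥ x) ⬝ᵥ y ≤ |(A *ᵥ x) ⬝ᵥ y| := le_abs_self _
    have h2 : |(A *ᵥ x) ⬝ᵥ y| = Real.sqrt (((A *ᵥ x) ⬝ᵥ y) ^ 2) :=
      (Real.sqrt_sq_eq_abs _).symm
    have h3 : Real.sqrt (((A *ᵥ x) ⬝ᵥ y) ^ 2) ≤ Real.sqrt ((p * r) ^ 2) :=
      Real.sqrt_le_sqrt (by nlinarith)
    have h4 : Real.sqrt ((p * r) ^ 2) = p * r := Real.sqrt_sq (by positivity)
    linarith
  have hexp : (x + y) ⬝ᵥ A *ᵥ (x + y) =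
      (y ⬝ᵥ A *ᵥ y) + 2 * ((A *ᵥ x) ⬝ᵥ y) + x ⬝ᵥ A *ᵥ x := by
    have := quad_expand hA.1 x y 1
    simpa using this
  have hle : (x + y) ⬝ᵥ A *ᵥ (x + y) ≤ (p + r) ^ 2 := by nlinarith
  calc Real.sqrt ((x + y) ⬝ᵥ A *ᵥ (x + y)) ≤ Real.sqrt ((p + r) ^ 2) :=
        Real.sqrt_le_sqrt hle
    _ = p + r := Real.sqrt_sq (by positivity)

end AuxLemmas

/-- Strong convexity of `F v = E[sqrt (vᵀ G v)]`: the fundamental tensor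
`(1/2) Hess(F²)(v)` is strictly positive definite for every `v ≠ 0`. -/
theorem expected_norm_strong_convexity
    (q : ℕ) {Ω : Type*} [MeasurableSpace Ω] (μ : Measure Ω) [IsProbabilityMeasure μ]
    (G : Ω → Matrix (Fin q) (Fin q) ℝ) (hG : ∀ ω, (G ω).PosDef)
    (hint : ∀ v : Fin q → ℝ, Integrable (fun ω => Real.sqrt (v ⬝ᵥ (G ω) *ᵥ v)) μ)
    (F : (Fin q → ℝ) → ℝ)
    (hF : ∀ v, F v = ∫ ω, Real.sqrt (v ⬝ᵥ (G ω) *ᵥ v) ∂μ)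
    (hsmooth : ContDiffOn ℝ (⊤ : ℕ∞) F {v | v ≠ 0})
    -- differentiation under the integral sign for the first derivative
    (hcomm₁ : ∀ v : Fin q → ℝ, v ≠ 0 → ∀ w,
      fderiv ℝ F v w =
        ∫ ω, (v ⬝ᵥ (G ω) *ᵥ v) ^ (-(1:ℝ)/2) * (((G ω) *ᵥ v) ⬝ᵥ w) ∂μ)
    -- differentiation under the integral sign for the second derivative
    (hcomm₂ : ∀ v : Fin q → ℝ, v ≠ 0 → ∀ w u,
      fderiv ℝ (fun x => fderiv ℝ F x u) v w =
        ∫ ω, ((v ⬝ᵥ (G ω) *ᵥ v) ^ (-(1:ℝ)/2) * (w ⬝ᵥ (G ω) *ᵥ u)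
          - (v ⬝ᵥ (G ω) *ᵥ v) ^ (-(3:ℝ)/2) * (((G ω) *ᵥ v) ⬝ᵥ w)
              * (((G ω) *ᵥ v) ⬝ᵥ u)) ∂μ) :
    ∀ v : Fin q → ℝ, v ≠ 0 → ∀ w : Fin q → ℝ, w ≠ 0 →
      0 < (1/2) * fderiv ℝ (fun x => fderiv ℝ (fun y => (F y) ^ 2) x w) v w := by
  intro v hv w hw
  have hs_open : IsOpen {x : Fin q → ℝ | x ≠ 0} := isOpen_ne
  have hvs : v ∈ {x : Fin q → ℝ | x ≠ 0} := hv
  have hv_nhds : {x : Fin q → ℝ | x ≠ 0} ∈ 𝓝 v := hs_open.mem_nhds hvs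
  have hFdiff : ∀ x : Fin q → ℝ, x ≠ 0 → DifferentiableAt ℝ F x := fun x hx =>
    (hsmooth.contDiffAt (hs_open.mem_nhds hx)).differentiableAt (by norm_num)
  have hfd1 : ContDiffOn ℝ 1 (fderiv ℝ F) {x : Fin q → ℝ | x ≠ 0} :=
    hsmooth.fderiv_of_isOpen hs_open (by exact WithTop.coe_le_coe.mpr le_top)
  have hG1diff : DifferentiableAt ℝ (fun x => fderiv ℝ F x w) v := by
    have h1 : DifferentiableAt ℝ (fderiv ℝ F) v :=
      (hfd1.contDiffAt hv_nhds).differentiableAt one_ne_zero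
    exact (ContinuousLinearMap.apply ℝ ℝ w).differentiableAt.comp v h1
  have heq1 : (fun x => fderiv ℝ (fun y => F y ^ 2) x w) =ᶠ[𝓝 v]
      fun x => 2 * F x * fderiv ℝ F x w := by
    filter_upwards [hv_nhds] with x hx
    have hdx := hFdiff x hx
    have hpow : (fun y => F y ^ 2) = fun y => F y * F y := by funext y; ring
    rw [hpow, fderiv_fun_mul hdx hdx]
    simp [smul_eq_mul]
    ring
  have hT : fderiv ℝ (fun x => fderiv ℝ (fun y => F y ^ 2) x w) v w
      = 2 * ((fderiv ℝ F v w) ^ 2 + F v * fderiv ℝ (fun x => fderiv ℝ F x w) v w) := by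
    rw [heq1.fderiv_eq]
    have hFv : DifferentiableAt ℝ F v := hFdiff v hv
    have h2 : (fun x => 2 * F x * fderiv ℝ F x w) = fun x => (2 * F x) * (fderiv ℝ F x w) := rfl
    rw [h2, fderiv_fun_mul (hFv.const_mul 2) hG1diff]
    simp [smul_eq_mul, fderiv_const_mul hFv 2]
    ring
  have hFpos : 0 < F v := by
    rw [hF v]
    rw [integral_pos_iff_support_of_nonneg_ae
      (Filter.Eventually.of_forall fun ω => Real.sqrt_nonneg _) (hint v)]
    have hsupp : (Function.support fun ω => Real.sqrt (v ⬝ᵥ G ω *ᵥ v)) = Set.univ := by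
      ext ω
      simp only [Function.mem_support, Set.mem_univ, iff_true]
      exact ne_of_gt (Real.sqrt_pos.mpr ((hG ω).dotProduct_mulVec_pos hv))
    rw [hsupp]
    simp
  rw [hT, hcomm₂ v hv w w]
  by_cases hdep : ∃ lam : ℝ, w = lam • v
  · -- dependent case
    obtain ⟨lam, rfl⟩ := hdep
    have hlam : lam ≠ 0 := by
      rintro rfl
      simp at hw
    have hzero : ∀ ω, ((v ⬝ᵥ G ω *ᵥ v) ^ (-(1:ℝ)/2) * ((lam • v) ⬝ᵥ G ω *ᵥ (lam • v))
        - (v ⬝ᵥ G ω *ᵥ v) ^ (-(3:ℝ)/2) * ((G ω *ᵥ v) ⬝ᵥ (lam • v))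
          * ((G ω *ᵥ v) ⬝ᵥ (lam • v))) = 0 := by
      intro ω
      have ha : 0 < v ⬝ᵥ G ω *ᵥ v := (hG ω).dotProduct_mulVec_pos hv
      have hsa : 0 < Real.sqrt (v ⬝ᵥ G ω *ᵥ v) := Real.sqrt_pos.mpr ha
      have hsq : Real.sqrt (v ⬝ᵥ G ω *ᵥ v) ^ 2 = v ⬝ᵥ G ω *ᵥ v := Real.sq_sqrt ha.le
      have hb : (G ω *ᵥ v) ⬝ᵥ (lam • v) = lam * (v ⬝ᵥ G ω *ᵥ v) := by
        rw [dotProduct_smul, symm_dot (hG ω).1 v v, smul_eq_mul]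
      have hc : (lam • v) ⬝ᵥ G ω *ᵥ (lam • v) = lam ^ 2 * (v ⬝ᵥ G ω *ᵥ v) := by
        rw [smul_dotProduct, Matrix.mulVec_smul, dotProduct_smul,
          smul_eq_mul, smul_eq_mul]
        ring
      rw [hb, hc, rpow_neg_half ha, rpow_neg_threehalf ha]
      field_simp
      ring
    have hI0 : (∫ ω, ((v ⬝ᵥ G ω *ᵥ v) ^ (-(1:ℝ)/2) * ((lam • v) ⬝ᵥ G ω *ᵥ (lam • v))
        - (v ⬝ᵥ G ω *ᵥ v) ^ (-(3:ℝ)/2) * ((G ω *ᵥ v) ⬝ᵥ (lam • v))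
          * ((G ω *ᵥ v) ⬝ᵥ (lam • v))) ∂μ) = 0 := by
      simp only [hzero]
      simp
    have hD1 : fderiv ℝ F v (lam • v) = lam * F v := by
      rw [hcomm₁ v hv (lam • v), hF v]
      have hptw : (fun ω => (v ⬝ᵥ G ω *ᵥ v) ^ (-(1:ℝ)/2) * ((G ω *ᵥ v) ⬝ᵥ (lam • v)))
          = fun ω => lam * Real.sqrt (v ⬝ᵥ G ω *ᵥ v) := by
        funext ω
        have ha : 0 < v ⬝ᵥ G ω *ᵥ v := (hG ω).dotProduct_mulVec_pos hv
        have hsa : 0 < Real.sqrt (v ⬝ᵥ G ω *ᵥ v) := Real.sqrt_pos.mpr ha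
        have hsq : Real.sqrt (v ⬝ᵥ G ω *ᵥ v) ^ 2 = v ⬝ᵥ G ω *ᵥ v := Real.sq_sqrt ha.le
        rw [dotProduct_smul, symm_dot (hG ω).1 v v, smul_eq_mul, rpow_neg_half ha]
        field_simp
        linear_combination (-1) * hsq
      rw [hptw, integral_const_mul]
    rw [hI0, hD1]
    have h1 : 0 < (lam * F v) ^ 2 := by positivity
    nlinarith [h1]
  · -- independent case
    push_neg at hdep
    have hline : ∀ t : ℝ, v + t • w ≠ 0 := by
      intro t h0
      rcases eq_or_ne t 0 with rfl | ht
      · simp at h0; exact hv h0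
      · refine hdep (-t⁻¹) ?_
        have hvw : v = -(t • w) := by rw [← add_eq_zero_iff_eq_neg]; exact h0
        rw [hvw]
        ext i
        simp [Pi.smul_apply]
        field_simp
    have hp : ∀ ω, ∀ t : ℝ, 0 < (w ⬝ᵥ G ω *ᵥ w) * t ^ 2
        + 2 * ((G ω *ᵥ v) ⬝ᵥ w) * t + v ⬝ᵥ G ω *ᵥ v := by
      intro ω t
      have h := quad_expand (hG ω).1 v w t
      rw [← h]
      exact (hG ω).dotProduct_mulVec_pos (hline t)
    set g : ℝ → ℝ := fun t => F (v + t • w) with hgdef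
    have hg2 : ContDiff ℝ 2 g := by
      rw [contDiff_iff_contDiffAt]
      intro t
      have hline' : ContDiff ℝ 2 (fun t : ℝ => v + t • w) :=
        contDiff_const.add (contDiff_id.smul contDiff_const)
      have hFt : ContDiffAt ℝ 2 F (v + t • w) :=
        (hsmooth.contDiffAt (hs_open.mem_nhds (hline t))).of_le (by exact WithTop.coe_le_coe.mpr le_top)
      exact hFt.comp t hline'.contDiffAt
    have htend := secondDiff_tendsto hg2
    set u : ℕ → ℝ := fun n => ((n : ℝ) + 1)⁻¹ with hu
    have hu_pos : ∀ n, 0 < u n := fun n => by positivity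
    have hu_ne : ∀ n, u n ≠ 0 := fun n => (hu_pos n).ne'
    have hu0 : Tendsto u atTop (𝓝[≠] (0:ℝ)) := by
      apply tendsto_nhdsWithin_of_tendsto_nhds_of_eventually_within
      · have := tendsto_one_div_add_atTop_nhds_zero_nat (𝕜 := ℝ)
        simpa [hu, one_div] using this
      · exact Filter.Eventually.of_forall fun n => hu_ne n
    have hL : Tendsto (fun n => (g (u n) + g (-u n) - 2 * g 0) / (u n) ^ 2) atTop
        (𝓝 (deriv (deriv g) 0)) := htend.comp hu0
    -- the φ functions
    set φ : ℕ → Ω → ℝ := fun n ω =>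
      (Real.sqrt ((v + u n • w) ⬝ᵥ G ω *ᵥ (v + u n • w))
        + Real.sqrt ((v + (-u n) • w) ⬝ᵥ G ω *ᵥ (v + (-u n) • w))
        - 2 * Real.sqrt (v ⬝ᵥ G ω *ᵥ v)) / (u n) ^ 2 with hφdef
    have hdouble : ∀ ω, ∀ t : ℝ, 2 * Real.sqrt (v ⬝ᵥ G ω *ᵥ v) ≤
        Real.sqrt ((v + t • w) ⬝ᵥ G ω *ᵥ (v + t • w))
          + Real.sqrt ((v + (-t) • w) ⬝ᵥ G ω *ᵥ (v + (-t) • w)) := by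
      intro ω t
      have htr := triangle_ineq (hG ω) (v + t • w) (v + (-t) • w)
      have hsum : (v + t • w) + (v + (-t) • w) = v + v := by
        ext i; simp; ring
      rw [hsum] at htr
      have hvv : (v + v) ⬝ᵥ G ω *ᵥ (v + v) = 4 * (v ⬝ᵥ G ω *ᵥ v) := by
        have h := quad_expand (hG ω).1 v v 1
        rw [one_smul] at h
        rw [h, symm_dot (hG ω).1 v v]
        ring
      rw [hvv] at htr
      have h4 : Real.sqrt (4 * (v ⬝ᵥ G ω *ᵥ v)) = 2 * Real.sqrt (v ⬝ᵥ G ω *ᵥ v) := by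
        rw [show (4:ℝ) * (v ⬝ᵥ G ω *ᵥ v) = 2 ^ 2 * (v ⬝ᵥ G ω *ᵥ v) by ring,
          Real.sqrt_mul (by norm_num : (0:ℝ) ≤ 2 ^ 2),
          Real.sqrt_sq (by norm_num : (0:ℝ) ≤ 2)]
      rw [h4] at htr
      exact htr
    have hφnonneg : ∀ n ω, 0 ≤ φ n ω := by
      intro n ω
      apply div_nonneg _ (sq_nonneg _)
      linarith [hdouble ω (u n)]
    have hφint : ∀ n, Integrable (φ n) μ := by
      intro n
      exact (((hint (v + u n • w)).add (hint (v + (-u n) • w))).sub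
        ((hint v).const_mul 2)).div_const _
    have hg0 : g 0 = F v := by rw [hgdef]; simp
    have hφeq : ∀ n, ∫ ω, φ n ω ∂μ = (g (u n) + g (-u n) - 2 * g 0) / (u n) ^ 2 := by
      intro n
      have hAB : Integrable (fun ω => Real.sqrt ((v + u n • w) ⬝ᵥ G ω *ᵥ (v + u n • w))
          + Real.sqrt ((v + (-u n) • w) ⬝ᵥ G ω *ᵥ (v + (-u n) • w))) μ :=
        (hint (v + u n • w)).add (hint (v + (-u n) • w))
      have hC : Integrable (fun ω => 2 * Real.sqrt (v ⬝ᵥ G ω *ᵥ v)) μ :=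
        (hint v).const_mul 2
      rw [hφdef]
      simp only []
      rw [integral_div]
      rw [integral_sub hAB hC]
      rw [integral_add (hint (v + u n • w)) (hint (v + (-u n) • w)), integral_const_mul]
      rw [hg0, hF v]
      have hgu : g (u n) = ∫ ω, Real.sqrt ((v + u n • w) ⬝ᵥ G ω *ᵥ (v + u n • w)) ∂μ := by
        rw [hgdef]; exact hF _
      have hgu' : g (-u n) = ∫ ω, Real.sqrt ((v + (-u n) • w) ⬝ᵥ G ω *ᵥ (v + (-u n) • w)) ∂μ := by
        rw [hgdef]; exact hF _
      rw [hgu, hgu']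
    -- pointwise convergence
    have hptw : ∀ ω, Tendsto (fun n => φ n ω) atTop
        (𝓝 ((v ⬝ᵥ G ω *ᵥ v) ^ (-(1:ℝ)/2) * (w ⬝ᵥ G ω *ᵥ w)
          - (v ⬝ᵥ G ω *ᵥ v) ^ (-(3:ℝ)/2) * ((G ω *ᵥ v) ⬝ᵥ w) * ((G ω *ᵥ v) ⬝ᵥ w))) := by
      intro ω
      have hpω := hp ω
      have hcd := sqrtq_contDiff hpω
      have ht2 := secondDiff_tendsto hcd
      rw [sqrtq_deriv2 hpω] at ht2
      have hcomp := ht2.comp hu0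
      have hφf : ∀ n, ((fun t : ℝ => Real.sqrt ((w ⬝ᵥ G ω *ᵥ w) * t ^ 2
            + 2 * ((G ω *ᵥ v) ⬝ᵥ w) * t + v ⬝ᵥ G ω *ᵥ v)) (u n)
          + (fun t : ℝ => Real.sqrt ((w ⬝ᵥ G ω *ᵥ w) * t ^ 2
            + 2 * ((G ω *ᵥ v) ⬝ᵥ w) * t + v ⬝ᵥ G ω *ᵥ v)) (-u n)
          - 2 * (fun t : ℝ => Real.sqrt ((w ⬝ᵥ G ω *ᵥ w) * t ^ 2
            + 2 * ((G ω *ᵥ v) ⬝ᵥ w) * t + v ⬝ᵥ G ω *ᵥ v)) 0) / (u n) ^ 2 = φ n ω := by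
        intro n
        rw [hφdef]
        simp only []
        rw [quad_expand (hG ω).1 v w (u n), quad_expand (hG ω).1 v w (-u n)]
        norm_num
      have := hcomp.congr hφf
      convert this using 2
      ring
    -- Fatou argument
    have hψmeas : ∀ n, AEMeasurable (fun ω => ENNReal.ofReal (φ n ω)) μ := fun n =>
      ENNReal.measurable_ofReal.comp_aemeasurable (hφint n).aestronglyMeasurable.aemeasurable
    have hFatou := lintegral_liminf_le' (u := atTop) hψmeas
    have hlim_pt : ∀ ω, Filter.liminf (fun n => ENNReal.ofReal (φ n ω)) atTop
        = ENNReal.ofReal ((v ⬝ᵥ G ω *ᵥ v) ^ (-(1:ℝ)/2) * (w ⬝ᵥ G ω *ᵥ w)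
          - (v ⬝ᵥ G ω *ᵥ v) ^ (-(3:ℝ)/2) * ((G ω *ᵥ v) ⬝ᵥ w) * ((G ω *ᵥ v) ⬝ᵥ w)) :=
      fun ω => (ENNReal.tendsto_ofReal (hptw ω)).liminf_eq
    have hlint_n : ∀ n, ∫⁻ ω, ENNReal.ofReal (φ n ω) ∂μ
        = ENNReal.ofReal ((g (u n) + g (-u n) - 2 * g 0) / (u n) ^ 2) := by
      intro n
      rw [← ofReal_integral_eq_lintegral_ofReal (hφint n)
        (Filter.Eventually.of_forall fun ω => hφnonneg n ω), hφeq n]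
    have hbound : ∫⁻ ω, ENNReal.ofReal ((v ⬝ᵥ G ω *ᵥ v) ^ (-(1:ℝ)/2) * (w ⬝ᵥ G ω *ᵥ w)
          - (v ⬝ᵥ G ω *ᵥ v) ^ (-(3:ℝ)/2) * ((G ω *ᵥ v) ⬝ᵥ w) * ((G ω *ᵥ v) ⬝ᵥ w)) ∂μ
        ≤ ENNReal.ofReal (deriv (deriv g) 0) := by
      calc ∫⁻ ω, ENNReal.ofReal ((v ⬝ᵥ G ω *ᵥ v) ^ (-(1:ℝ)/2) * (w ⬝ᵥ G ω *ᵥ w)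
            - (v ⬝ᵥ G ω *ᵥ v) ^ (-(3:ℝ)/2) * ((G ω *ᵥ v) ⬝ᵥ w) * ((G ω *ᵥ v) ⬝ᵥ w)) ∂μ
          = ∫⁻ ω, Filter.liminf (fun n => ENNReal.ofReal (φ n ω)) atTop ∂μ := by
            apply lintegral_congr
            intro ω
            rw [hlim_pt ω]
        _ ≤ Filter.liminf (fun n => ∫⁻ ω, ENNReal.ofReal (φ n ω) ∂μ) atTop := hFatou
        _ = Filter.liminf (fun n =>
              ENNReal.ofReal ((g (u n) + g (-u n) - 2 * g 0) / (u n) ^ 2)) atTop := by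
            apply Filter.liminf_congr
            exact Filter.Eventually.of_forall hlint_n
        _ = ENNReal.ofReal (deriv (deriv g) 0) := (ENNReal.tendsto_ofReal hL).liminf_eq
    -- measurability of the integrand
    have hNas : ∀ x : Fin q → ℝ, AEMeasurable (fun ω => Real.sqrt (x ⬝ᵥ G ω *ᵥ x)) μ :=
      fun x => (hint x).aestronglyMeasurable.aemeasurable
    have hqm : ∀ x : Fin q → ℝ, AEMeasurable (fun ω => x ⬝ᵥ G ω *ᵥ x) μ := by
      intro x
      have haa : (fun ω => x ⬝ᵥ G ω *ᵥ x) = fun ω => (Real.sqrt (x ⬝ᵥ G ω *ᵥ x)) ^ 2 := by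
        funext ω; exact (Real.sq_sqrt ((hG ω).posSemidef.dotProduct_mulVec_nonneg x)).symm
      rw [haa]
      exact (hNas x).pow_const 2
    have hbm : AEMeasurable (fun ω => (G ω *ᵥ v) ⬝ᵥ w) μ := by
      have hrw : (fun ω => (G ω *ᵥ v) ⬝ᵥ w) = fun ω =>
          (((v + w) ⬝ᵥ G ω *ᵥ (v + w)) - v ⬝ᵥ G ω *ᵥ v - w ⬝ᵥ G ω *ᵥ w) / 2 := by
        funext ω
        have h := quad_expand (hG ω).1 v w 1
        rw [one_smul] at h
        rw [h]; ring
      rw [hrw]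
      exact (((hqm (v + w)).sub (hqm v)).sub (hqm w)).div_const 2
    have hsqrt_rw : (fun ω => (v ⬝ᵥ G ω *ᵥ v) ^ (-(1:ℝ)/2) * (w ⬝ᵥ G ω *ᵥ w)
          - (v ⬝ᵥ G ω *ᵥ v) ^ (-(3:ℝ)/2) * ((G ω *ᵥ v) ⬝ᵥ w) * ((G ω *ᵥ v) ⬝ᵥ w))
        = fun ω => (Real.sqrt (v ⬝ᵥ G ω *ᵥ v))⁻¹ * (w ⬝ᵥ G ω *ᵥ w)
          - ((v ⬝ᵥ G ω *ᵥ v) * Real.sqrt (v ⬝ᵥ G ω *ᵥ v))⁻¹ * ((G ω *ᵥ v) ⬝ᵥ w)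
            * ((G ω *ᵥ v) ⬝ᵥ w) := by
      funext ω
      have ha : 0 < v ⬝ᵥ G ω *ᵥ v := (hG ω).dotProduct_mulVec_pos hv
      rw [rpow_neg_half ha, rpow_neg_threehalf ha]
    have hfm : AEStronglyMeasurable (fun ω => (v ⬝ᵥ G ω *ᵥ v) ^ (-(1:ℝ)/2) * (w ⬝ᵥ G ω *ᵥ w)
          - (v ⬝ᵥ G ω *ᵥ v) ^ (-(3:ℝ)/2) * ((G ω *ᵥ v) ⬝ᵥ w) * ((G ω *ᵥ v) ⬝ᵥ w)) μ := by
      rw [hsqrt_rw]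
      exact (((hNas v).inv.mul (hqm w)).sub
        ((((hqm v).mul (hNas v)).inv.mul hbm).mul hbm)).aestronglyMeasurable
    -- strict pointwise positivity
    have hfpos : ∀ ω, 0 < (v ⬝ᵥ G ω *ᵥ v) ^ (-(1:ℝ)/2) * (w ⬝ᵥ G ω *ᵥ w)
          - (v ⬝ᵥ G ω *ᵥ v) ^ (-(3:ℝ)/2) * ((G ω *ᵥ v) ⬝ᵥ w) * ((G ω *ᵥ v) ⬝ᵥ w) := by
      intro ω
      have ha : 0 < v ⬝ᵥ G ω *ᵥ v := (hG ω).dotProduct_mulVec_pos hv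
      have hsa : 0 < Real.sqrt (v ⬝ᵥ G ω *ᵥ v) := Real.sqrt_pos.mpr ha
      have hsq : Real.sqrt (v ⬝ᵥ G ω *ᵥ v) ^ 2 = v ⬝ᵥ G ω *ᵥ v := Real.sq_sqrt ha.le
      have hcs := cs_lt (hG ω) hv hdep
      rw [rpow_neg_half ha, rpow_neg_threehalf ha]
      have heq : (Real.sqrt (v ⬝ᵥ G ω *ᵥ v))⁻¹ * (w ⬝ᵥ G ω *ᵥ w)
          - ((v ⬝ᵥ G ω *ᵥ v) * Real.sqrt (v ⬝ᵥ G ω *ᵥ v))⁻¹ * ((G ω *ᵥ v) ⬝ᵥ w)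
            * ((G ω *ᵥ v) ⬝ᵥ w)
          = ((v ⬝ᵥ G ω *ᵥ v) * Real.sqrt (v ⬝ᵥ G ω *ᵥ v))⁻¹
            * ((v ⬝ᵥ G ω *ᵥ v) * (w ⬝ᵥ G ω *ᵥ w) - ((G ω *ᵥ v) ⬝ᵥ w) ^ 2) := by
        field_simp
      rw [heq]
      apply mul_pos
      · positivity
      · linarith [hcs]
    -- integrability
    have hfint : Integrable (fun ω => (v ⬝ᵥ G ω *ᵥ v) ^ (-(1:ℝ)/2) * (w ⬝ᵥ G ω *ᵥ w)
          - (v ⬝ᵥ G ω *ᵥ v) ^ (-(3:ℝ)/2) * ((G ω *ᵥ v) ⬝ᵥ w) * ((G ω *ᵥ v) ⬝ᵥ w)) μ := by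
      refine ⟨hfm, ?_⟩
      rw [hasFiniteIntegral_iff_ofReal (Filter.Eventually.of_forall fun ω => (hfpos ω).le)]
      exact lt_of_le_of_lt hbound ENNReal.ofReal_lt_top
    have hIpos : 0 < ∫ ω, ((v ⬝ᵥ G ω *ᵥ v) ^ (-(1:ℝ)/2) * (w ⬝ᵥ G ω *ᵥ w)
          - (v ⬝ᵥ G ω *ᵥ v) ^ (-(3:ℝ)/2) * ((G ω *ᵥ v) ⬝ᵥ w) * ((G ω *ᵥ v) ⬝ᵥ w)) ∂μ := by
      rw [integral_pos_iff_support_of_nonneg_ae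
        (Filter.Eventually.of_forall fun ω => (hfpos ω).le) hfint]
      have hsupp : (Function.support fun ω => (v ⬝ᵥ G ω *ᵥ v) ^ (-(1:ℝ)/2) * (w ⬝ᵥ G ω *ᵥ w)
          - (v ⬝ᵥ G ω *ᵥ v) ^ (-(3:ℝ)/2) * ((G ω *ᵥ v) ⬝ᵥ w) * ((G ω *ᵥ v) ⬝ᵥ w))
          = Set.univ := by
        ext ω
        simp only [Function.mem_support, Set.mem_univ, iff_true]
        exact ne_of_gt (hfpos ω)
      rw [hsupp]
      simp
    nlinarith [sq_nonneg (fderiv ℝ F v w), mul_pos hFpos hIpos]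
end

section
/- Wendel's inequality: for all real x > 0 and y ∈ [0,1], Γ(x+y)/Γ(x) ≤ x^y. -/
/-! `log ∘ Γ` is convex on `(0, ∞)` and rises by `log x` from `x` to `x + 1`, so on `[x, x + 1]`
it lies below the chord `t ↦ log Γ(x) + (t - x) log x`; exponentiating at `t = x + y` gives the
inequality. -/

open Real Set

lemma log_Gamma_add_le {x y : ℝ} (hx : 0 < x) (hy₀ : 0 ≤ y) (hy₁ : y ≤ 1) :
    log (Gamma (x + y)) ≤ log (Gamma x) + y * log x := by
  have hchord := convexOn_log_Gamma.2 (mem_Ioi.mpr hx) (mem_Ioi.mpr (by linarith : 0 < x + 1))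
    (sub_nonneg.mpr hy₁) hy₀ (by ring)
  have hpoint : (1 - y) * x + y * (x + 1) = x + y := by ring
  have hlog_succ : log (Gamma (x + 1)) = log (Gamma x) + log x := by
    rw [Gamma_add_one hx.ne', log_mul hx.ne' (Gamma_pos_of_pos hx).ne', add_comm]
  simp only [smul_eq_mul, hpoint, Function.comp_apply, hlog_succ] at hchord
  linarith

lemma Gamma_add_le_rpow_mul_Gamma {x y : ℝ} (hx : 0 < x) (hy₀ : 0 ≤ y) (hy₁ : y ≤ 1) :
    Gamma (x + y) ≤ x ^ y * Gamma x := by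
  have hΓx := Gamma_pos_of_pos hx
  rw [← log_le_log_iff (Gamma_pos_of_pos (by linarith)) (by positivity),
    log_mul (by positivity) hΓx.ne', log_rpow hx]
  linarith [log_Gamma_add_le hx hy₀ hy₁]

/-- Wendel's inequality: for `x > 0` and `y ∈ [0,1]`, `Γ(x+y)/Γ(x) ≤ x^y`. -/
theorem wendel_inequality
    (x y : ℝ) (hx : 0 < x) (hy : y ∈ Set.Icc (0:ℝ) 1) :
    Real.Gamma (x + y) / Real.Gamma x ≤ x ^ y := by
  rw [div_le_iff₀ (Gamma_pos_of_pos hx)]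
  exact Gamma_add_le_rpow_mul_Gamma hx hy.1 hy.2
end

section
/- Sharpened Jensen inequality for the square root: let X be a nonnegative real random variable with mean μ > 0 and finite variance. Then −Var[X]/(2 μ^{3/2}) ≤ E[sqrt(X)] − sqrt(μ) ≤ 0. -/
/-!
Let `R(x) = √x - √μ - (x - μ) / (2√μ)` be the gap between `√x` and its tangent line at `μ`.
Since `E[X] = μ`, the tangent term has mean zero and `E[√X] - √μ = E[R(X)]`. Completing the square
gives `R(x) = -(√x - √μ)² / (2√μ)`, so `R ≤ 0`; and `(√x - √μ)² = (x - μ)² / (√x + √μ)² ≤ (x - μ)² / μ`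
gives `R(x) ≥ -(x - μ)² / (2 μ^{3/2})`. Taking expectations yields both inequalities.
-/

open MeasureTheory ProbabilityTheory

namespace Real

noncomputable def sqrtTangentGap (μ x : ℝ) : ℝ :=
  √x - √μ - (x - μ) / (2 * √μ)

variable {x μ : ℝ}

theorem sqrtTangentGap_eq (hx : 0 ≤ x) (hμ : 0 < μ) :
    sqrtTangentGap μ x = -(√x - √μ) ^ 2 / (2 * √μ) := by
  have hm : 0 < √μ := sqrt_pos.mpr hμ
  rw [sqrtTangentGap]
  field_simp
  linear_combination sq_sqrt hx - sq_sqrt hμ.le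

theorem sqrtTangentGap_nonpos (hx : 0 ≤ x) (hμ : 0 < μ) : sqrtTangentGap μ x ≤ 0 := by
  rw [sqrtTangentGap_eq hx hμ, neg_div]
  exact neg_nonpos.mpr (by positivity)

theorem sq_mul_sq_sqrt_sub_sqrt_le (hx : 0 ≤ x) (hμ : 0 ≤ μ) :
    √μ ^ 2 * (√x - √μ) ^ 2 ≤ (x - μ) ^ 2 := by
  have hfactor : (x - μ) ^ 2 = (√x + √μ) ^ 2 * (√x - √μ) ^ 2 := by
    rw [← mul_pow, ← sq_sub_sq, sq_sqrt hx, sq_sqrt hμ]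
  rw [hfactor]
  gcongr
  exact le_add_of_nonneg_left (sqrt_nonneg x)

theorem neg_sq_div_le_sqrtTangentGap (hx : 0 ≤ x) (hμ : 0 < μ) :
    -(x - μ) ^ 2 / (2 * √μ ^ 3) ≤ sqrtTangentGap μ x := by
  have hm : 0 < √μ := sqrt_pos.mpr hμ
  rw [sqrtTangentGap_eq hx hμ, neg_div, neg_div, neg_le_neg_iff,
    div_le_div_iff₀ (by positivity) (by positivity)]
  nlinarith [sq_mul_sq_sqrt_sub_sqrt_le hx hμ.le]

end Real

open Real

section Expectation

variable {Ω : Type*} [MeasurableSpace Ω] {P : Measure Ω} {X : Ω → ℝ}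

theorem MeasureTheory.Integrable.sqrt [IsFiniteMeasure P] (hX : Integrable X P) :
    Integrable (fun ω => √(X ω)) P := by
  refine ((integrable_const 1).add hX.abs).mono'
    (continuous_sqrt.comp_aestronglyMeasurable hX.1) (ae_of_all _ fun ω => ?_)
  change ‖√(X ω)‖ ≤ 1 + |X ω|
  rw [norm_of_nonneg (sqrt_nonneg _)]
  nlinarith [sqrt_le_sqrt (le_abs_self (X ω)), sqrt_nonneg |X ω|, sq_sqrt (abs_nonneg (X ω))]

theorem MeasureTheory.Integrable.sqrtTangentGap [IsFiniteMeasure P] (hX : Integrable X P)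
    (μ : ℝ) : Integrable (fun ω => sqrtTangentGap μ (X ω)) P :=
  (hX.sqrt.sub (integrable_const _)).sub ((hX.sub (integrable_const _)).div_const _)

theorem integral_sqrt_sub_sqrt_integral [IsProbabilityMeasure P] (hX : Integrable X P) :
    (∫ ω, √(X ω) ∂P) - √(∫ ω, X ω ∂P) = ∫ ω, sqrtTangentGap (∫ ω, X ω ∂P) (X ω) ∂P := by
  set m := ∫ ω, X ω ∂P
  have hcentered : ∫ ω, (X ω - m) / (2 * √m) ∂P = 0 := by
    rw [integral_div, integral_sub hX (integrable_const m)]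
    simp [m]
  simp only [sqrtTangentGap]
  rw [integral_sub (f := fun ω => √(X ω) - √m) (g := fun ω => (X ω - m) / (2 * √m))
      (hX.sqrt.sub (integrable_const _)) ((hX.sub (integrable_const _)).div_const _),
    hcentered, integral_sub hX.sqrt (integrable_const _)]
  simp

end Expectation

/-- Sharpened Jensen inequality for the square root:
`−Var[X]/(2 μ^{3/2}) ≤ E[sqrt X] − sqrt μ ≤ 0` where `μ = E[X] > 0`. -/
theorem sharpened_jensen_sqrt
    {Ω : Type*} [MeasureSpace Ω] [IsProbabilityMeasure (ℙ : Measure Ω)]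
    (X : Ω → ℝ) (hXnonneg : ∀ᵐ ω, 0 ≤ X ω)
    (hXint : Integrable X) (hX2int : Integrable (fun ω => (X ω) ^ 2))
    (μ : ℝ) (hμ : μ = ∫ ω, X ω) (hμpos : 0 < μ) :
    -(variance X ℙ) / (2 * μ ^ ((3:ℝ)/2)) ≤ (∫ ω, Real.sqrt (X ω)) - Real.sqrt μ ∧
    (∫ ω, Real.sqrt (X ω)) - Real.sqrt μ ≤ 0 := by
  have hvar : variance X ℙ = ∫ ω, (X ω - μ) ^ 2 := hμ ▸ variance_eq_integral hXint.aemeasurable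
  have hpow : μ ^ ((3:ℝ)/2) = √μ ^ 3 := by
    rw [rpow_div_two_eq_sqrt _ hμpos.le]
    exact_mod_cast rpow_natCast (√μ) 3
  have hsq : Integrable (fun ω => (X ω - μ) ^ 2) :=
    ((memLp_two_iff_integrable_sq hXint.1).mpr hX2int |>.sub (memLp_const μ)).integrable_sq
  rw [hμ, integral_sqrt_sub_sqrt_integral hXint, ← hμ, hvar, hpow, ← integral_neg, ← integral_div]
  constructor
  · refine integral_mono_ae (hsq.neg.div_const _) (hXint.sqrtTangentGap μ) ?_
    filter_upwards [hXnonneg] with ω hω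
    exact neg_sq_div_le_sqrtTangentGap hω hμpos
  · exact integral_nonpos_of_ae <| hXnonneg.mono fun ω hω => sqrtTangentGap_nonpos hω hμpos
end
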